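/- Let G=(V,E) be a connected finite graph with n vertices and m edges, α ∈ (0,1), and let w(t) be a solution of the entropy flow on [0,T) with initial weight w_0 ∈ ℝ^m_+. Then there exists a constant C > 0, depending only on m, n, α and w_0 (but not on T), such that for every edge e ∈ E and every t ∈ [0,T), 0 < min_{τ∈E} w_{0,τ} ≤ w_e(t) ≤ Σ_{τ∈E} w_τ(t) ≤ C e^{Ct}. -/

import Mathlib

open Finset Filter Topology

namespace EntropyFlowPaper

variable {V : Type*} [Fintype V] [DecidableEq V]

/-- Effective weight: the value of `w` on edges, `0` on non-edges. -/
noncomputable def ew (G : SimpleGraph V) [DecidableRel G.Adj] (w : Sym2 V → ℝ) (a b : V) : ℝ :=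
  if G.Adj a b then w s(a, b) else 0

/-- Auxiliary layers: `(layerAux G x j).1 = N_j(x)` and `(layerAux G x j).2 = ⋃_{k ≤ j} N_k(x)`:
the `(j+1)`-st layer consists of the vertices adjacent to `⋃_{k ≤ j} N_k(x)` that do not lie
in `⋃_{k ≤ j} N_k(x)`. -/
def layerAux (G : SimpleGraph V) [DecidableRel G.Adj] (x : V) : ℕ → Finset V × Finset V
  | 0 => ({x}, {x})
  | (j + 1) =>
      let p := layerAux G x j
      let next := Finset.univ.filter fun u => u ∉ p.2 ∧ ∃ a ∈ p.2, G.Adj u a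
      (next, p.2 ∪ next)

/-- The `j`-step neighbor set `N_j(x)`. -/
def layer (G : SimpleGraph V) [DecidableRel G.Adj] (x : V) (j : ℕ) : Finset V :=
  (layerAux G x j).1

/-- The outward-walk probability `P(x, z)`, for `z` in the `ℓ`-th layer `N_ℓ(x)`:
`P(x,z) = Σ_{chains x = z₀, z₁ ∈ N₁(x), …, z_{ℓ-1} ∈ N_{ℓ-1}(x), z_ℓ = z}
  Π_k w_{z_{k-1} z_k} / (Σ_{u ∈ N_k(x)} w_{z_{k-1} u})`, written recursively. -/
noncomputable def outP (G : SimpleGraph V) [DecidableRel G.Adj] (w : Sym2 V → ℝ) (x : V) :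
    ℕ → V → ℝ
  | 0, z => if z = x then 1 else 0
  | (ℓ + 1), z => ∑ y ∈ layer G x ℓ,
      outP G w x ℓ y * ew G w y z / ∑ u ∈ layer G x (ℓ + 1), ew G w y u

/-- The `α`-lazy outward random walk `R_x^α(z)`: it equals `α` at `z = x`; for `z ∈ N_j(x)`
(`j ≥ 1`) it equals `(1-α)^j * α * P(x,z)` if `z` is adjacent to `N_{j+1}(x)`, and
`(1-α)^j * P(x,z)` otherwise. -/
noncomputable def lazyWalk (G : SimpleGraph V) [DecidableRel G.Adj] (w : Sym2 V → ℝ) (α : ℝ)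
    (x z : V) : ℝ :=
  if z = x then α
  else ∑ j ∈ Finset.Icc 1 (Fintype.card V),
    (if z ∈ layer G x j then
      (if ∃ u ∈ layer G x (j + 1), G.Adj z u then (1 - α) ^ j * α * outP G w x j z
       else (1 - α) ^ j * outP G w x j z)
     else 0)

/-- Kullback–Leibler divergence `D_KL(P, Q) = Σ_z P z * log (P z / Q z)` on a finite set. -/
noncomputable def KL (P Q : V → ℝ) : ℝ := ∑ z, P z * Real.log (P z / Q z)

/-- The edge entropy `𝔇_e^α = D_KL(R_x^α, R_y^α) + D_KL(R_y^α, R_x^α)` for the edge `e = xy`. -/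
noncomputable def entropyD (G : SimpleGraph V) [DecidableRel G.Adj] (w : Sym2 V → ℝ) (α : ℝ)
    (x y : V) : ℝ :=
  KL (lazyWalk G w α x) (lazyWalk G w α y) + KL (lazyWalk G w α y) (lazyWalk G w α x)

/-- Euclidean distance `|w - w'|` between two weight vectors, over the edges of `G`. -/
noncomputable def wdist (G : SimpleGraph V) [DecidableRel G.Adj] (w w' : Sym2 V → ℝ) : ℝ :=
  Real.sqrt (∑ e ∈ G.edgeFinset, (w e - w' e) ^ 2)

/-- `w` is a solution of the entropy flow `w_e'(t) = 𝔇_e^α(t)`, `w_e(t) > 0`, `w_e(0) = w0_e`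
on the time set `S`. -/
def IsEntropyFlowSolutionOn (G : SimpleGraph V) [DecidableRel G.Adj] (α : ℝ)
    (w0 : Sym2 V → ℝ) (S : Set ℝ) (w : ℝ → Sym2 V → ℝ) : Prop :=
  (∀ e ∈ G.edgeFinset, w 0 e = w0 e) ∧
  (∀ t ∈ S, ∀ e ∈ G.edgeFinset, 0 < w t e) ∧
  (∀ t ∈ S, ∀ x y : V, G.Adj x y →
    HasDerivWithinAt (fun τ => w τ s(x, y)) (entropyD G (w t) α x y) S t)


set_option linter.unusedSectionVars false

variable (G : SimpleGraph V) [DecidableRel G.Adj] (x : V)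


def cum (j : ℕ) : Finset V := (layerAux G x j).2

lemma layer_zero : layer G x 0 = {x} := rfl
lemma cum_zero : cum G x 0 = {x} := rfl
lemma cum_succ (j : ℕ) : cum G x (j + 1) = cum G x j ∪ layer G x (j + 1) := rfl
lemma layer_succ (j : ℕ) : layer G x (j + 1)
    = Finset.univ.filter (fun u => u ∉ cum G x j ∧ ∃ a ∈ cum G x j, G.Adj u a) := rfl

lemma layer_subset_cum (j : ℕ) : layer G x j ⊆ cum G x j := by
  cases j with
  | zero => exact subset_rfl
  | succ j => rw [cum_succ]; exact Finset.subset_union_right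

lemma cum_mono : Monotone (cum G x) := by
  apply monotone_nat_of_le_succ
  intro j
  rw [cum_succ]; exact Finset.subset_union_left

lemma not_mem_cum_of_mem_layer {j k : ℕ} (h : j < k) {z : V} (hz : z ∈ layer G x k) :
    z ∉ cum G x j := by
  obtain ⟨k, rfl⟩ := Nat.exists_eq_add_of_lt h
  rw [layer_succ, Finset.mem_filter] at hz
  intro hmem
  exact hz.2.1 (cum_mono G x (by omega : j ≤ j + k) hmem)

lemma not_mem_layer_of_mem_layer {j k : ℕ} (h : j < k) {z : V} (hz : z ∈ layer G x k) :
    z ∉ layer G x j :=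
  fun hm => not_mem_cum_of_mem_layer G x h hz (layer_subset_cum G x j hm)

lemma exists_layer_of_mem_cum {j : ℕ} {z : V} (hz : z ∈ cum G x j) :
    ∃ k ≤ j, z ∈ layer G x k := by
  induction j with
  | zero => exact ⟨0, le_rfl, hz⟩
  | succ j ih =>
    rw [cum_succ, Finset.mem_union] at hz
    rcases hz with hz | hz
    · obtain ⟨k, hk, hzk⟩ := ih hz
      exact ⟨k, by omega, hzk⟩
    · exact ⟨j + 1, le_rfl, hz⟩

lemma x_mem_cum (j : ℕ) : x ∈ cum G x j :=
  cum_mono G x (Nat.zero_le j) (by simp [cum_zero])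

lemma adj_layer_of_mem_layer_succ {j : ℕ} {z : V} (hz : z ∈ layer G x (j + 1)) :
    ∃ y ∈ layer G x j, G.Adj y z := by
  have hz' := hz
  rw [layer_succ, Finset.mem_filter] at hz'
  obtain ⟨-, -, a, ha, hadj⟩ := hz'
  cases j with
  | zero => exact ⟨a, ha, hadj.symm⟩
  | succ j =>
    rw [cum_succ, Finset.mem_union] at ha
    rcases ha with ha | ha
    · exfalso
      have : z ∈ layer G x (j + 1) := by
        rw [layer_succ, Finset.mem_filter]
        exact ⟨Finset.mem_univ z, not_mem_cum_of_mem_layer G x (by omega) hz, a, ha, hadj⟩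
      exact not_mem_layer_of_mem_layer G x (by omega) hz this
    · exact ⟨a, ha, hadj.symm⟩

lemma exists_boundary (s : Finset V) {a u : V} (ha : a ∈ s) (hu : u ∉ s) (p : G.Walk a u) :
    ∃ b v, b ∈ s ∧ v ∉ s ∧ G.Adj b v := by
  induction p with
  | nil => exact absurd ha hu
  | @cons a b u hadj p ih =>
    by_cases hb : b ∈ s
    · exact ih hb hu
    · exact ⟨a, b, ha, hb, hadj⟩

lemma cum_eq_univ (hG : G.Connected) : cum G x (Fintype.card V) = Finset.univ := by
  have key : ∀ j : ℕ, cum G x j = Finset.univ ∨ j + 1 ≤ (cum G x j).card := by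
    intro j
    induction j with
    | zero => right; simp [cum_zero]
    | succ j ih =>
      rcases ih with h | h
      · left
        exact Finset.univ_subset_iff.mp (h ▸ cum_mono G x (Nat.le_succ j))
      · by_cases huniv : cum G x j = Finset.univ
        · left; exact Finset.univ_subset_iff.mp (huniv ▸ cum_mono G x (Nat.le_succ j))
        · right
          obtain ⟨u, hu⟩ : ∃ u, u ∉ cum G x j := by
            by_contra hc
            push_neg at hc
            exact huniv (Finset.eq_univ_of_forall hc)
          obtain ⟨b, v, hb, hv, hadj⟩ :=
            exists_boundary G (cum G x j) (x_mem_cum G x j) hu ((hG x u).some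
              |>.copy rfl rfl)
          have hvmem : v ∈ cum G x (j + 1) := by
            rw [cum_succ, Finset.mem_union]
            right
            rw [layer_succ, Finset.mem_filter]
            exact ⟨Finset.mem_univ v, hv, b, hb, hadj.symm⟩
          calc j + 1 + 1 ≤ (cum G x j).card + 1 := by omega
            _ ≤ (insert v (cum G x j)).card := by
                rw [Finset.card_insert_of_notMem hv]
            _ ≤ (cum G x (j + 1)).card := by
                apply Finset.card_le_card
                intro z hz
                rw [Finset.mem_insert] at hz
                rcases hz with rfl | hz
                · exact hvmem
                · exact cum_mono G x (Nat.le_succ j) hz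
  rcases key (Fintype.card V) with h | h
  · exact h
  · exfalso
    have := Finset.card_le_univ (cum G x (Fintype.card V))
    omega

lemma exists_layer (hG : G.Connected) (z : V) :
    ∃ k ≤ Fintype.card V, z ∈ layer G x k := by
  have : z ∈ cum G x (Fintype.card V) := by rw [cum_eq_univ G x hG]; exact Finset.mem_univ z
  exact exists_layer_of_mem_cum G x this

variable (G : SimpleGraph V) [DecidableRel G.Adj] (w : Sym2 V → ℝ)

section ewlem
variable (hw : ∀ e ∈ G.edgeFinset, 0 < w e)
include hw

lemma ew_nonneg (a b : V) : 0 ≤ ew G w a b := by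
  unfold ew
  split
  · next h => exact (hw _ (by simpa [SimpleGraph.mem_edgeFinset] using h)).le
  · exact le_refl _

lemma ew_pos {a b : V} (h : G.Adj a b) : 0 < ew G w a b := by
  unfold ew
  rw [if_pos h]
  exact hw _ (by simpa [SimpleGraph.mem_edgeFinset] using h)

lemma sum_ew_le (y : V) (s : Finset V) :
    ∑ u ∈ s, ew G w y u ≤ ∑ e ∈ G.edgeFinset, w e := by
  have h1 : ∑ u ∈ s, ew G w y u = ∑ u ∈ s.filter (fun u => G.Adj y u), w s(y, u) := by
    rw [Finset.sum_filter]
    rfl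
  rw [h1]
  have h2 : ∑ u ∈ s.filter (fun u => G.Adj y u), w s(y, u)
      = ∑ e ∈ (s.filter (fun u => G.Adj y u)).image (fun u => s(y, u)), w e := by
    rw [Finset.sum_image]
    intro a _ b _ hab
    rcases Sym2.eq_iff.mp hab with ⟨-, h⟩ | ⟨h1, h2⟩
    · exact h
    · rw [← h1, h2]
  rw [h2]
  apply Finset.sum_le_sum_of_subset_of_nonneg
  · intro e he
    simp only [Finset.mem_image, Finset.mem_filter] at he
    obtain ⟨u, ⟨-, hadj⟩, rfl⟩ := he
    rwa [SimpleGraph.mem_edgeFinset, SimpleGraph.mem_edgeSet]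
  · intro e he _
    exact (hw e he).le

end ewlem

lemma ew_of_adj {a b : V} (h : G.Adj a b) : ew G w a b = w s(a, b) := if_pos h

lemma outP_succ (x : V) (ℓ : ℕ) (z : V) : outP G w x (ℓ + 1) z
    = ∑ y ∈ layer G x ℓ, outP G w x ℓ y * ew G w y z
        / ∑ u ∈ layer G x (ℓ + 1), ew G w y u := rfl

section outPlem
variable (x : V) (hw : ∀ e ∈ G.edgeFinset, 0 < w e)
include hw

lemma outP_nonneg : ∀ (j : ℕ) (z : V), 0 ≤ outP G w x j z := by
  intro j
  induction j with
  | zero => intro z; unfold outP; positivity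
  | succ j ih =>
    intro z
    unfold outP
    apply Finset.sum_nonneg
    intro y _
    have h1 := ih y
    have h2 := ew_nonneg G w hw y z
    have h3 : (0:ℝ) ≤ ∑ u ∈ layer G x (j + 1), ew G w y u :=
      Finset.sum_nonneg fun u _ => ew_nonneg G w hw y u
    positivity

lemma sum_outP_le_one : ∀ j : ℕ, ∑ z ∈ layer G x j, outP G w x j z ≤ 1 := by
  intro j
  induction j with
  | zero => rw [layer_zero]; simp [outP]
  | succ j ih =>
    calc ∑ z ∈ layer G x (j + 1), outP G w x (j + 1) z
        = ∑ y ∈ layer G x j, ∑ z ∈ layer G x (j + 1),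
            outP G w x j y * ew G w y z / ∑ u ∈ layer G x (j + 1), ew G w y u := by
          simp only [outP_succ]
          rw [Finset.sum_comm]
      _ ≤ ∑ y ∈ layer G x j, outP G w x j y := by
          apply Finset.sum_le_sum
          intro y hy
          set D := ∑ u ∈ layer G x (j + 1), ew G w y u with hD
          rcases eq_or_lt_of_le (Finset.sum_nonneg fun u _ => ew_nonneg G w hw y u : (0:ℝ) ≤ D)
            with h0 | h0
          · have hD0 : D = 0 := by rw [hD, ← h0]
            rw [hD0]
            simp only [div_zero, Finset.sum_const_zero]
            exact outP_nonneg G w x hw j y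
          · have : ∑ z ∈ layer G x (j + 1), outP G w x j y * ew G w y z / D
                = outP G w x j y * D / D := by
              rw [← Finset.sum_div, ← Finset.mul_sum]
            rw [this, mul_div_assoc, div_self (ne_of_gt h0), mul_one]
      _ ≤ 1 := ih

lemma outP_le_one {j : ℕ} {z : V} (hz : z ∈ layer G x j) : outP G w x j z ≤ 1 := by
  calc outP G w x j z ≤ ∑ z ∈ layer G x j, outP G w x j z :=
        Finset.single_le_sum (fun y _ => outP_nonneg G w x hw j y) hz
    _ ≤ 1 := sum_outP_le_one G w x hw j

lemma outP_ge {ε : ℝ} (hε : 0 < ε) (hεw : ∀ e ∈ G.edgeFinset, ε ≤ w e)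
    (hS : 0 < ∑ e ∈ G.edgeFinset, w e) :
    ∀ (j : ℕ) (z : V), z ∈ layer G x j →
      (ε / ∑ e ∈ G.edgeFinset, w e) ^ j ≤ outP G w x j z := by
  set S := ∑ e ∈ G.edgeFinset, w e with hSdef
  intro j
  induction j with
  | zero =>
    intro z hz
    rw [layer_zero, Finset.mem_singleton] at hz
    subst hz
    simp [outP]
  | succ j ih =>
    intro z hz
    obtain ⟨y, hy, hadj⟩ := adj_layer_of_mem_layer_succ G x hz
    have hDz : 0 < ew G w y z := ew_pos G w hw hadj
    have hDle : ∑ u ∈ layer G x (j + 1), ew G w y u ≤ S := sum_ew_le G w hw y _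
    have hDpos : 0 < ∑ u ∈ layer G x (j + 1), ew G w y u :=
      lt_of_lt_of_le hDz
        (Finset.single_le_sum (fun u _ => ew_nonneg G w hw y u) hz)
    have hterm : (ε / S) ^ j * ε / S
        ≤ outP G w x j y * ew G w y z / ∑ u ∈ layer G x (j + 1), ew G w y u := by
      apply div_le_div₀ (mul_nonneg (outP_nonneg G w x hw j y) hDz.le) _ hDpos hDle
      have hεe : ε ≤ ew G w y z := by
        rw [ew_of_adj G w hadj]
        exact hεw _ (by simpa [SimpleGraph.mem_edgeFinset] using hadj)
      apply mul_le_mul (ih y hy) hεe hε.le (outP_nonneg G w x hw j y)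
    calc (ε / S) ^ (j + 1) = (ε / S) ^ j * ε / S := by ring
      _ ≤ outP G w x j y * ew G w y z / ∑ u ∈ layer G x (j + 1), ew G w y u := hterm
      _ ≤ outP G w x (j + 1) z := by
          rw [outP_succ]
          apply Finset.single_le_sum _ hy
          intro i _
          have h1 := outP_nonneg G w x hw j i
          have h2 := ew_nonneg G w hw i z
          have h3 : (0:ℝ) ≤ ∑ u ∈ layer G x (j + 1), ew G w i u :=
            Finset.sum_nonneg fun u _ => ew_nonneg G w hw i u
          positivity

end outPlem

section lazyLem

variable {α ε : ℝ} (x : V)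

lemma lazyWalk_eval (hG : G.Connected) {z : V} (hz : z ≠ x) :
    ∃ j, 1 ≤ j ∧ j ≤ Fintype.card V ∧ z ∈ layer G x j ∧
      lazyWalk G w α x z =
        (if ∃ u ∈ layer G x (j + 1), G.Adj z u then (1 - α) ^ j * α * outP G w x j z
         else (1 - α) ^ j * outP G w x j z) := by
  obtain ⟨k, hk, hzk⟩ := exists_layer G x hG z
  have hk1 : 1 ≤ k := by
    rcases Nat.eq_zero_or_pos k with rfl | h
    · rw [layer_zero, Finset.mem_singleton] at hzk; exact absurd hzk hz
    · exact h
  refine ⟨k, hk1, hk, hzk, ?_⟩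
  unfold lazyWalk
  rw [if_neg hz]
  rw [Finset.sum_eq_single_of_mem k (Finset.mem_Icc.mpr ⟨hk1, hk⟩)]
  · rw [if_pos hzk]
    by_cases h : ∃ u ∈ layer G x (k + 1), G.Adj z u <;> simp [h]
  · intro i _ hik
    rw [if_neg]
    rcases lt_or_gt_of_ne hik with h | h
    · exact not_mem_layer_of_mem_layer G x h hzk
    · intro hzi
      exact not_mem_layer_of_mem_layer G x h hzi hzk

lemma lazyWalk_le_one (hG : G.Connected) (hα : α ∈ Set.Ioo (0:ℝ) 1)
    (hw : ∀ e ∈ G.edgeFinset, 0 < w e) (z : V) :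
    lazyWalk G w α x z ≤ 1 := by
  obtain ⟨hα0, hα1⟩ := hα
  by_cases hz : z = x
  · rw [lazyWalk, if_pos hz]; linarith
  · obtain ⟨j, _, _, hzj, heq⟩ := lazyWalk_eval G w x hG hz
    rw [heq]
    have h1 : (1 - α) ^ j ≤ 1 := pow_le_one₀ (by linarith) (by linarith)
    have h1' : (0:ℝ) ≤ (1 - α) ^ j := pow_nonneg (by linarith) j
    have h2 : outP G w x j z ≤ 1 := outP_le_one G w x hw hzj
    have h3 : 0 ≤ outP G w x j z := outP_nonneg G w x hw j z
    split
    · exact mul_le_one₀ (mul_le_one₀ h1 hα0.le hα1.le) h3 h2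
    · exact mul_le_one₀ h1 h3 h2

lemma div_eS_le_one (hE : G.edgeFinset.Nonempty) (hε : 0 < ε)
    (hεw : ∀ e ∈ G.edgeFinset, ε ≤ w e) :
    0 < ∑ e ∈ G.edgeFinset, w e ∧ ε / ∑ e ∈ G.edgeFinset, w e ≤ 1
    ∧ 0 < ε / ∑ e ∈ G.edgeFinset, w e := by
  obtain ⟨e0, he0⟩ := hE
  have hεS : ε ≤ ∑ e ∈ G.edgeFinset, w e :=
    le_trans (hεw e0 he0)
      (Finset.single_le_sum (fun e he => le_trans hε.le (hεw e he)) he0)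
  have hS : 0 < ∑ e ∈ G.edgeFinset, w e := lt_of_lt_of_le hε hεS
  exact ⟨hS, div_le_one_of_le₀ hεS hS.le, div_pos hε hS⟩

lemma lazyWalk_ge (hG : G.Connected) (hE : G.edgeFinset.Nonempty)
    (hα : α ∈ Set.Ioo (0:ℝ) 1) (hε : 0 < ε) (hεw : ∀ e ∈ G.edgeFinset, ε ≤ w e) (z : V) :
    α * (1 - α) ^ (Fintype.card V) * (ε / ∑ e ∈ G.edgeFinset, w e) ^ (Fintype.card V)
      ≤ lazyWalk G w α x z := by
  obtain ⟨hα0, hα1⟩ := hα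
  have hw : ∀ e ∈ G.edgeFinset, 0 < w e := fun e he => lt_of_lt_of_le hε (hεw e he)
  obtain ⟨hS, hr1, hr0⟩ := div_eS_le_one G w hE hε hεw
  set S := ∑ e ∈ G.edgeFinset, w e with hSdef
  set n := Fintype.card V with hn
  by_cases hz : z = x
  · rw [lazyWalk, if_pos hz]
    have h1 : (1 - α) ^ n ≤ 1 := pow_le_one₀ (by linarith) (by linarith)
    have h2 : (ε / S) ^ n ≤ 1 := pow_le_one₀ hr0.le hr1
    have h1' : (0:ℝ) ≤ (1 - α) ^ n := pow_nonneg (by linarith) n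
    have h2' : (0:ℝ) ≤ (ε / S) ^ n := pow_nonneg hr0.le n
    calc α * (1 - α) ^ n * (ε / S) ^ n ≤ α * (1 - α) ^ n :=
          mul_le_of_le_one_right (by positivity) h2
      _ ≤ α := mul_le_of_le_one_right hα0.le h1
  · obtain ⟨j, hj1, hj2, hzj, heq⟩ := lazyWalk_eval G w x hG hz
    rw [heq]
    have hA : (1 - α) ^ n ≤ (1 - α) ^ j :=
      pow_le_pow_of_le_one (by linarith) (by linarith) hj2
    have hB : (ε / S) ^ n ≤ (ε / S) ^ j :=
      pow_le_pow_of_le_one hr0.le hr1 hj2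
    have hC : (ε / S) ^ j ≤ outP G w x j z := outP_ge G w x hw hε hεw hS j z hzj
    have h2' : (0:ℝ) ≤ (ε / S) ^ n := pow_nonneg hr0.le n
    have h1' : (0:ℝ) ≤ (1 - α) ^ j := pow_nonneg (by linarith) j
    have key : α * (1 - α) ^ n * (ε / S) ^ n ≤ (1 - α) ^ j * α * outP G w x j z := by
      calc α * (1 - α) ^ n * (ε / S) ^ n ≤ α * (1 - α) ^ j * (ε / S) ^ j := by
            apply mul_le_mul (mul_le_mul le_rfl hA (pow_nonneg (by linarith) n) hα0.le)
              hB h2' (by positivity)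
        _ ≤ α * (1 - α) ^ j * outP G w x j z := by
            apply mul_le_mul_of_nonneg_left hC (by positivity)
        _ = (1 - α) ^ j * α * outP G w x j z := by ring
    split
    · exact key
    · calc α * (1 - α) ^ n * (ε / S) ^ n ≤ (1 - α) ^ j * α * outP G w x j z := key
        _ ≤ (1 - α) ^ j * 1 * outP G w x j z := by
            apply mul_le_mul_of_nonneg_right _ (outP_nonneg G w x hw j z)
            apply mul_le_mul_of_nonneg_left hα1.le h1'
        _ = (1 - α) ^ j * outP G w x j z := by ring

end lazyLem

lemma KL_add_KL_nonneg {P Q : V → ℝ} (hP : ∀ z, 0 < P z) (hQ : ∀ z, 0 < Q z) :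
    0 ≤ KL P Q + KL Q P := by
  unfold KL
  rw [← Finset.sum_add_distrib]
  apply Finset.sum_nonneg
  intro z _
  have hp := hP z
  have hq := hQ z
  have key : P z * Real.log (P z / Q z) + Q z * Real.log (Q z / P z)
      = (P z - Q z) * Real.log (P z / Q z) := by
    rw [Real.log_div hp.ne' hq.ne', Real.log_div hq.ne' hp.ne']; ring
  rw [key]
  rcases le_total (Q z) (P z) with h | h
  · apply mul_nonneg (by linarith)
    apply Real.log_nonneg
    rw [le_div_iff₀ hq]; linarith
  · have h1 : Real.log (P z / Q z) ≤ 0 :=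
      Real.log_nonpos (by positivity) (by rw [div_le_one hq]; linarith)
    nlinarith

lemma KL_le_of_bounds {P Q : V → ℝ} {L : ℝ} (hL : 0 < L) (hL1 : L ≤ 1)
    (hP0 : ∀ z, 0 ≤ P z) (hP1 : ∀ z, P z ≤ 1) (hQ : ∀ z, L ≤ Q z) :
    KL P Q ≤ (Fintype.card V : ℝ) * (-Real.log L) := by
  unfold KL
  have hlog : 0 ≤ -Real.log L := by
    rw [neg_nonneg]; exact Real.log_nonpos hL.le hL1
  calc ∑ z, P z * Real.log (P z / Q z) ≤ ∑ _z : V, -Real.log L := by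
        apply Finset.sum_le_sum
        intro z _
        have hq : 0 < Q z := lt_of_lt_of_le hL (hQ z)
        rcases le_or_gt (Real.log (P z / Q z)) 0 with h | h
        · exact le_trans (mul_nonpos_of_nonneg_of_nonpos (hP0 z) h) hlog
        · have hppos : 0 < P z := by
            rcases (hP0 z).lt_or_eq with hp | hp
            · exact hp
            · exfalso
              rw [← hp, zero_div, Real.log_zero] at h
              exact lt_irrefl 0 h
          have hr : P z / Q z ≤ 1 / L :=
            div_le_div₀ zero_le_one (hP1 z) hL (hQ z)
          have hlr : Real.log (P z / Q z) ≤ Real.log (1 / L) :=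
            Real.log_le_log (by positivity) hr
          calc P z * Real.log (P z / Q z) ≤ 1 * Real.log (P z / Q z) :=
                mul_le_mul_of_nonneg_right (hP1 z) h.le
            _ = Real.log (P z / Q z) := one_mul _
            _ ≤ Real.log (1 / L) := hlr
            _ = -Real.log L := by rw [one_div, Real.log_inv]
      _ = (Fintype.card V : ℝ) * (-Real.log L) := by
        rw [Finset.sum_const, Finset.card_univ, nsmul_eq_mul]

section dlem
variable {α ε : ℝ}

lemma entropyD_nonneg (hG : G.Connected) (hE : G.edgeFinset.Nonempty)
    (hα : α ∈ Set.Ioo (0:ℝ) 1) (hw : ∀ e ∈ G.edgeFinset, 0 < w e) (x y : V) :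
    0 ≤ entropyD G w α x y := by
  classical
  set ε' := G.edgeFinset.inf' hE w with hε'
  have hε'pos : 0 < ε' := by
    obtain ⟨e0, he0, heq⟩ := Finset.exists_mem_eq_inf' hE w
    rw [hε', heq]; exact hw e0 he0
  have hεw : ∀ e ∈ G.edgeFinset, ε' ≤ w e := fun e he => Finset.inf'_le w he
  have hpos : ∀ u z : V, 0 < lazyWalk G w α u z := by
    intro u z
    have := lazyWalk_ge G w u hG hE hα hε'pos hεw z
    obtain ⟨hS, hr1, hr0⟩ := div_eS_le_one G w hE hε'pos hεw
    have hL : 0 < α * (1 - α) ^ (Fintype.card V)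
        * (ε' / ∑ e ∈ G.edgeFinset, w e) ^ (Fintype.card V) := by
      have h1 : (0:ℝ) < 1 - α := by have := hα.2; linarith
      have := hα.1
      positivity
    linarith
  exact KL_add_KL_nonneg (hpos x) (hpos y)

lemma entropyD_le (hG : G.Connected) (hE : G.edgeFinset.Nonempty)
    (hα : α ∈ Set.Ioo (0:ℝ) 1) (hε : 0 < ε) (hεw : ∀ e ∈ G.edgeFinset, ε ≤ w e) (x y : V) :
    entropyD G w α x y ≤ 2 * (Fintype.card V : ℝ) *
      (-Real.log (α * (1 - α) ^ (Fintype.card V)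
        * (ε / ∑ e ∈ G.edgeFinset, w e) ^ (Fintype.card V))) := by
  have hw : ∀ e ∈ G.edgeFinset, 0 < w e := fun e he => lt_of_lt_of_le hε (hεw e he)
  obtain ⟨hS, hr1, hr0⟩ := div_eS_le_one G w hE hε hεw
  set L := α * (1 - α) ^ (Fintype.card V)
      * (ε / ∑ e ∈ G.edgeFinset, w e) ^ (Fintype.card V) with hLdef
  have h1a : (0:ℝ) < 1 - α := by have := hα.2; linarith
  have hα0 := hα.1
  have hL : 0 < L := by rw [hLdef]; positivity
  have hL1 : L ≤ 1 := by
    have h1 : (1 - α) ^ (Fintype.card V) ≤ 1 := pow_le_one₀ h1a.le (by have := hα.1; linarith)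
    have h2 : (ε / ∑ e ∈ G.edgeFinset, w e) ^ (Fintype.card V) ≤ 1 := pow_le_one₀ hr0.le hr1
    calc L ≤ α * (1 - α) ^ (Fintype.card V) :=
          mul_le_of_le_one_right (by positivity) h2
      _ ≤ α := mul_le_of_le_one_right hα0.le h1
      _ ≤ 1 := hα.2.le
  have hlow : ∀ u z : V, L ≤ lazyWalk G w α u z := fun u z =>
    lazyWalk_ge G w u hG hE hα hε hεw z
  have hup : ∀ u z : V, lazyWalk G w α u z ≤ 1 := fun u z =>
    lazyWalk_le_one G w u hG hα hw z
  have h0 : ∀ u z : V, 0 ≤ lazyWalk G w α u z := fun u z =>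
    le_trans hL.le (hlow u z)
  unfold entropyD
  have b1 := KL_le_of_bounds hL hL1 (h0 x) (hup x) (hlow y)
  have b2 := KL_le_of_bounds hL hL1 (h0 y) (hup y) (hlow x)
  linarith

end dlem

lemma neg_log_le {α ε S : ℝ} (hα : α ∈ Set.Ioo (0:ℝ) 1) (hε : 0 < ε) (hS : 0 < S) (n : ℕ) :
    -Real.log (α * (1 - α) ^ n * (ε / S) ^ n)
      ≤ |Real.log α| + n * |Real.log (1 - α)| + n * |Real.log ε| + n * S := by
  obtain ⟨hα0, hα1⟩ := hα
  have h1a : (0:ℝ) < 1 - α := by linarith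
  have e1 : Real.log (α * (1 - α) ^ n * (ε / S) ^ n)
      = Real.log α + n * Real.log (1 - α) + n * (Real.log ε - Real.log S) := by
    rw [Real.log_mul (by positivity) (by positivity),
      Real.log_mul (by positivity) (by positivity),
      Real.log_pow, Real.log_pow, Real.log_div hε.ne' hS.ne']

  rw [e1]
  have hn : (0:ℝ) ≤ (n : ℝ) := Nat.cast_nonneg n
  have t1 : -Real.log α ≤ |Real.log α| := neg_le_abs _
  have t2 : -Real.log (1 - α) ≤ |Real.log (1 - α)| := neg_le_abs _
  have t3 : -Real.log ε ≤ |Real.log ε| := neg_le_abs _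
  have t4 : Real.log S ≤ S := by
    have := Real.log_le_sub_one_of_pos hS; linarith
  nlinarith [mul_le_mul_of_nonneg_left t2 hn, mul_le_mul_of_nonneg_left t3 hn,
    mul_le_mul_of_nonneg_left t4 hn]



end EntropyFlowPaper

open EntropyFlowPaper

set_option maxHeartbeats 1000000 in
/-- along any solution of the entropy flow on `[0, T)` with positive initial
weight `w0`, there is a constant `C > 0` not depending on `T` such that
`0 < min_τ w_{0,τ} ≤ w_e(t) ≤ Σ_τ w_τ(t) ≤ C e^{C t}`. -/
theorem entropyFlow_exponential_bound {V : Type*} [Fintype V] [DecidableEq V]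
    (G : SimpleGraph V) [DecidableRel G.Adj] (hG : G.Connected)
    (hE : G.edgeFinset.Nonempty)
    (α : ℝ) (hα : α ∈ Set.Ioo (0 : ℝ) 1)
    (w0 : Sym2 V → ℝ) (hw0 : ∀ e ∈ G.edgeFinset, 0 < w0 e) :
    ∃ C : ℝ, 0 < C ∧ ∀ T : ℝ, 0 < T → ∀ w : ℝ → Sym2 V → ℝ,
      IsEntropyFlowSolutionOn G α w0 (Set.Ico 0 T) w →
      ∀ t ∈ Set.Ico (0 : ℝ) T, ∀ e ∈ G.edgeFinset,
        0 < G.edgeFinset.inf' hE w0 ∧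
        G.edgeFinset.inf' hE w0 ≤ w t e ∧
        w t e ≤ ∑ τ ∈ G.edgeFinset, w t τ ∧
        ∑ τ ∈ G.edgeFinset, w t τ ≤ C * Real.exp (C * t) := by
  classical
  set ε0 := G.edgeFinset.inf' hE w0 with hε0def
  have hε0 : 0 < ε0 := by
    obtain ⟨e0, he0, heq⟩ := Finset.exists_mem_eq_inf' hE w0
    rw [hε0def, heq]; exact hw0 e0 he0
  have hε0w : ∀ e ∈ G.edgeFinset, ε0 ≤ w0 e := fun e he => Finset.inf'_le w0 he
  clear_value ε0
  set S0 := ∑ e ∈ G.edgeFinset, w0 e with hS0def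
  have hS0 : 0 < S0 := by rw [hS0def]; exact Finset.sum_pos hw0 hE
  clear_value S0
  set A : ℝ := |Real.log α| + (Fintype.card V : ℝ) * |Real.log (1 - α)|
      + (Fintype.card V : ℝ) * |Real.log ε0| with hAdef
  have hA : 0 ≤ A := by
    rw [hAdef]
    have h1 : (0:ℝ) ≤ (Fintype.card V : ℝ) := Nat.cast_nonneg _
    have h2 := abs_nonneg (Real.log α)
    have h3 := abs_nonneg (Real.log (1 - α))
    have h4 := abs_nonneg (Real.log ε0)
    nlinarith
  clear_value A
  have hAS0 : 0 ≤ A / S0 := div_nonneg hA hS0.le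
  set K : ℝ := 2 * (Fintype.card V : ℝ) * (G.edgeFinset.card : ℝ) * (A / S0 + (Fintype.card V : ℝ)) + 1
    with hKdef
  have hK : 0 < K := by
    rw [hKdef]
    have h1 : (0:ℝ) ≤ 2 * (Fintype.card V : ℝ) * (G.edgeFinset.card : ℝ)
        * (A / S0 + (Fintype.card V : ℝ)) :=
      mul_nonneg (mul_nonneg (mul_nonneg (by norm_num) (Nat.cast_nonneg _)) (Nat.cast_nonneg _))
        (add_nonneg hAS0 (Nat.cast_nonneg _))
    linarith
  clear_value K
  refine ⟨K + S0, by linarith, ?_⟩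
  intro T hT w hsol t ht e he
  obtain ⟨hw0eq, hwpos, hwderiv⟩ := hsol
  set D2 : ℝ → Sym2 V → ℝ := fun τ e =>
    Sym2.lift ⟨fun a b => entropyD G (w τ) α a b,
      fun a b => by unfold entropyD; ring⟩ e with hD2def
  have hder : ∀ τ ∈ Set.Ico (0:ℝ) T, ∀ e ∈ G.edgeFinset,
      HasDerivWithinAt (fun σ => w σ e) (D2 τ e) (Set.Ico 0 T) τ := by
    intro τ hτ e he
    induction e using Sym2.ind with
    | _ a b =>
      have hadj : G.Adj a b := by
        rwa [SimpleGraph.mem_edgeFinset, SimpleGraph.mem_edgeSet] at he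
      simpa [hD2def, Sym2.lift_mk] using hwderiv τ hτ a b hadj
  have hD2eq : ∀ τ (a b : V), D2 τ s(a, b) = entropyD G (w τ) α a b := fun τ a b => by
    simp [hD2def, Sym2.lift_mk]
  clear_value D2
  have hD2nonneg : ∀ τ ∈ Set.Ico (0:ℝ) T, ∀ e ∈ G.edgeFinset, 0 ≤ D2 τ e := by
    intro τ hτ e he
    induction e using Sym2.ind with
    | _ a b =>
      rw [hD2eq]
      exact entropyD_nonneg G (w τ) hG hE hα (hwpos τ hτ) a b
  have hmono : ∀ e ∈ G.edgeFinset, MonotoneOn (fun τ => w τ e) (Set.Ico 0 T) := by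
    intro e he
    apply monotoneOn_of_hasDerivWithinAt_nonneg (convex_Ico 0 T)
      (f' := fun τ => D2 τ e)
    · exact fun τ hτ => (hder τ hτ e he).continuousWithinAt
    · intro τ hτ
      have hτ' : τ ∈ Set.Ico 0 T := interior_subset hτ
      exact (hder τ hτ' e he).mono interior_subset
    · intro τ hτ
      exact hD2nonneg τ (interior_subset hτ) e he
  have h0mem : (0:ℝ) ∈ Set.Ico (0:ℝ) T := ⟨le_refl 0, hT⟩
  have hlower : ∀ τ ∈ Set.Ico (0:ℝ) T, ∀ e ∈ G.edgeFinset, ε0 ≤ w τ e := by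
    intro τ hτ e he
    calc ε0 ≤ w0 e := hε0w e he
      _ = w 0 e := (hw0eq e he).symm
      _ ≤ w τ e := hmono e he h0mem hτ hτ.1
  set f : ℝ → ℝ := fun τ => ∑ e ∈ G.edgeFinset, w τ e with hfdef
  have hfval : ∀ τ, f τ = ∑ e ∈ G.edgeFinset, w τ e := fun τ => by rw [hfdef]
  set f' : ℝ → ℝ := fun τ => ∑ e ∈ G.edgeFinset, D2 τ e with hf'def
  have hf'val : ∀ τ, f' τ = ∑ e ∈ G.edgeFinset, D2 τ e := fun τ => by rw [hf'def]
  have hfder : ∀ τ ∈ Set.Ico (0:ℝ) T, HasDerivWithinAt f (f' τ) (Set.Ico 0 T) τ := by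
    intro τ hτ
    rw [hfdef, hf'def]
    exact HasDerivWithinAt.fun_sum fun e he => hder τ hτ e he
  clear_value f f'
  have hf0 : f 0 = S0 := by
    rw [hfval, hS0def]
    exact Finset.sum_congr rfl fun e he => hw0eq e he
  have hfS0 : ∀ τ ∈ Set.Ico (0:ℝ) T, S0 ≤ f τ := by
    intro τ hτ
    rw [← hf0, hfval, hfval]
    exact Finset.sum_le_sum fun e he => hmono e he h0mem hτ hτ.1
  have hfpos : ∀ τ ∈ Set.Ico (0:ℝ) T, 0 < f τ := fun τ hτ =>
    lt_of_lt_of_le hS0 (hfS0 τ hτ)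
  have hf'nonneg : ∀ τ ∈ Set.Ico (0:ℝ) T, 0 ≤ f' τ := by
    intro τ hτ
    rw [hf'val]
    exact Finset.sum_nonneg fun e he => hD2nonneg τ hτ e he
  have hf'bound : ∀ τ ∈ Set.Ico (0:ℝ) T, f' τ ≤ K * f τ := by
    intro τ hτ
    have hwτ := hlower τ hτ
    have hfτpos : (0:ℝ) < ∑ e ∈ G.edgeFinset, w τ e := by
      rw [← hfval]; exact hfpos τ hτ
    have hDe : ∀ e ∈ G.edgeFinset,
        D2 τ e ≤ 2 * (Fintype.card V : ℝ) * (A + (Fintype.card V : ℝ) * f τ) := by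
      intro e he
      induction e using Sym2.ind with
      | _ a b =>
        rw [hD2eq]
        have hle := entropyD_le G (w τ) hG hE hα hε0 hwτ a b
        have hnl := neg_log_le (S := ∑ e ∈ G.edgeFinset, w τ e) hα hε0
          hfτpos (Fintype.card V)
        have h2n : (0:ℝ) ≤ 2 * (Fintype.card V : ℝ) :=
          mul_nonneg (by norm_num) (Nat.cast_nonneg _)
        calc entropyD G (w τ) α a b
            ≤ 2 * (Fintype.card V : ℝ) * (-Real.log (α * (1 - α) ^ (Fintype.card V)
                * (ε0 / ∑ e ∈ G.edgeFinset, w τ e) ^ (Fintype.card V))) := hle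
          _ ≤ 2 * (Fintype.card V : ℝ) * (A + (Fintype.card V : ℝ) * f τ) := by
              apply mul_le_mul_of_nonneg_left _ h2n
              rw [hAdef, hfval]
              exact hnl
    have hsum : f' τ ≤ (G.edgeFinset.card : ℝ)
        * (2 * (Fintype.card V : ℝ) * (A + (Fintype.card V : ℝ) * f τ)) := by
      rw [hf'val]
      calc ∑ e ∈ G.edgeFinset, D2 τ e
          ≤ ∑ _e ∈ G.edgeFinset, 2 * (Fintype.card V : ℝ)
              * (A + (Fintype.card V : ℝ) * f τ) := Finset.sum_le_sum hDe
        _ = (G.edgeFinset.card : ℝ) * (2 * (Fintype.card V : ℝ)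
              * (A + (Fintype.card V : ℝ) * f τ)) := by
            rw [Finset.sum_const, nsmul_eq_mul]
    have hAf : A ≤ (A / S0) * f τ := by
      calc A = (A / S0) * S0 := by rw [div_mul_cancel₀ _ hS0.ne']
        _ ≤ (A / S0) * f τ :=
            mul_le_mul_of_nonneg_left (hfS0 τ hτ) hAS0
    have hfτ0 : 0 ≤ f τ := (hfpos τ hτ).le
    have hcard : (0:ℝ) ≤ (G.edgeFinset.card : ℝ) := Nat.cast_nonneg _
    have h2n : (0:ℝ) ≤ 2 * (Fintype.card V : ℝ) :=
      mul_nonneg (by norm_num) (Nat.cast_nonneg _)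
    calc f' τ ≤ (G.edgeFinset.card : ℝ)
          * (2 * (Fintype.card V : ℝ) * (A + (Fintype.card V : ℝ) * f τ)) := hsum
      _ ≤ (G.edgeFinset.card : ℝ) * (2 * (Fintype.card V : ℝ)
            * ((A / S0) * f τ + (Fintype.card V : ℝ) * f τ)) := by
          apply mul_le_mul_of_nonneg_left _ hcard
          apply mul_le_mul_of_nonneg_left _ h2n
          linarith
      _ = (2 * (Fintype.card V : ℝ) * (G.edgeFinset.card : ℝ)
            * (A / S0 + (Fintype.card V : ℝ))) * f τ := by ring
      _ ≤ K * f τ := by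
          apply mul_le_mul_of_nonneg_right _ hfτ0
          rw [hKdef]; linarith
  have hsub : Set.Icc (0:ℝ) t ⊆ Set.Ico 0 T := fun τ hτ =>
    ⟨hτ.1, lt_of_le_of_lt hτ.2 ht.2⟩
  have hgron : f t ≤ S0 * Real.exp (K * t) := by
    have hcont : ContinuousOn f (Set.Icc 0 t) :=
      fun τ hτ => ((hfder τ (hsub hτ)).continuousWithinAt).mono hsub
    have hder' : ∀ τ ∈ Set.Ico (0:ℝ) t, HasDerivWithinAt f (f' τ) (Set.Ici τ) τ := by
      intro τ hτ
      have hτ' : τ ∈ Set.Ico (0:ℝ) T := ⟨hτ.1, lt_trans hτ.2 ht.2⟩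
      exact (hfder τ hτ').mono_of_mem_nhdsWithin (Ico_mem_nhdsGE_of_mem hτ')
    have hbound : ∀ τ ∈ Set.Ico (0:ℝ) t, ‖f' τ‖ ≤ K * ‖f τ‖ + 0 := by
      intro τ hτ
      have hτ' : τ ∈ Set.Ico (0:ℝ) T := ⟨hτ.1, lt_trans hτ.2 ht.2⟩
      rw [Real.norm_eq_abs, Real.norm_eq_abs, abs_of_nonneg (hf'nonneg τ hτ'),
        abs_of_pos (hfpos τ hτ'), add_zero]
      exact hf'bound τ hτ'
    have ha : ‖f 0‖ ≤ S0 := by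
      rw [Real.norm_eq_abs, hf0, abs_of_pos hS0]
    have hfin := norm_le_gronwallBound_of_norm_deriv_right_le hcont hder' ha hbound t
      ⟨ht.1, le_refl t⟩
    rwa [gronwallBound_ε0, sub_zero, Real.norm_eq_abs, abs_of_pos (hfpos t ht)] at hfin
  refine ⟨hε0, hlower t ht e he, ?_, ?_⟩
  · exact Finset.single_le_sum (fun τ hτ => (hwpos t ht τ hτ).le) he
  · calc ∑ τ ∈ G.edgeFinset, w t τ = f t := (hfval t).symm
      _ ≤ S0 * Real.exp (K * t) := hgron
      _ ≤ (K + S0) * Real.exp ((K + S0) * t) := by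
          apply mul_le_mul (by linarith) _ (Real.exp_pos _).le (by linarith)
          apply Real.exp_le_exp.mpr
          apply mul_le_mul_of_nonneg_right (by linarith) ht.1
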